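/- Let n ≥ 4 be an integer. Then μ₂(𝔏(Q_n)) ≤ 12(n−2)(n+7)/(n(n²−1)), where μ₂ denotes the second-smallest eigenvalue. -/

import Mathlib

open Matrix

/-- The ascending sorted list of eigenvalues (with multiplicity) of a real
symmetric (Hermitian) matrix; junk value `[]` otherwise. -/
noncomputable def eigsList {m : Type*} [Fintype m] [DecidableEq m]
    (M : Matrix m m ℝ) : List ℝ :=
  if h : M.IsHermitian then Multiset.sort (Finset.univ.val.map h.eigenvalues) (· ≤ ·)
  else []

/-- The `k`-th largest eigenvalue (1-indexed, counted with multiplicity). -/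
noncomputable def kthLargest {m : Type*} [Fintype m] [DecidableEq m]
    (M : Matrix m m ℝ) (k : ℕ) : ℝ :=
  (eigsList M).getD (Fintype.card m - k) 0

/-- The `k`-th smallest eigenvalue (1-indexed, counted with multiplicity). -/
noncomputable def kthSmallest {m : Type*} [Fintype m] [DecidableEq m]
    (M : Matrix m m ℝ) (k : ℕ) : ℝ :=
  (eigsList M).getD (k - 1) 0

/-- The Laplacian `𝔏(M) = diag(M·1) − M`. -/
noncomputable def Lap {n : ℕ} (M : Matrix (Fin n) (Fin n) ℝ) : Matrix (Fin n) (Fin n) ℝ :=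
  Matrix.diagonal (fun i => ∑ j, M i j) - M

/-- The matrix `Q_n` (1-indexed description, realized on `Fin n`). -/
noncomputable def Qmat (n : ℕ) : Matrix (Fin n) (Fin n) ℝ := fun i j =>
  let d := ((i.val : ℤ) - (j.val : ℤ)).natAbs
  if d = 0 then
    (if i.val = 0 ∨ i.val = n - 1 then ((n : ℝ) ^ 2 - n - 6) / 2
     else if i.val = 1 ∨ i.val = n - 2 then ((n : ℝ) ^ 2 - 3 * n - 2) / 2
     else ((n : ℝ) ^ 2 - 3 * n - 6) / 2)
  else if d = 1 then (n : ℝ) - 2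
  else if d = 2 then 2
  else 0

/-- The matrix `Q'_n` (1-indexed description, realized on `Fin n`). -/
noncomputable def Qp (n : ℕ) : Matrix (Fin n) (Fin n) ℝ := fun i j =>
  let a := i.val + 1
  let b := j.val + 1
  if (a = 1 ∧ b = 2) ∨ (a = 2 ∧ b = 1) then (n : ℝ) - 2
  else if (a = 1 ∧ b = 3) ∨ (a = 3 ∧ b = 1) then 2
  else if a = 2 ∧ b = 2 then 1
  else if (a = 2 ∧ b = 3) ∨ (a = 3 ∧ b = 2) then 1
  else if a = 3 ∧ b = 3 then (n : ℝ) - 4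
  else if (3 ≤ a ∧ a ≤ n - 1 ∧ b = a + 1) ∨ (3 ≤ b ∧ b ≤ n - 1 ∧ a = b + 1) then 1
  else if a = b ∧ 4 ≤ a ∧ a ≤ n - 1 then (n : ℝ) - 2
  else if a = n ∧ b = n then (n : ℝ) - 1
  else 0

/-!
The all-ones vector lies in the kernel of every Laplacian and is orthogonal to the ramp
`x i = n - 1 - 2 i`. Restricted to the plane they span, the quadratic form of `𝔏(Q_n)` is at most
`max 0 R(x)` times the squared norm, where `R` is the Rayleigh quotient, so `μ₂ ≤ R(x)`.
The Laplacian forgets the diagonal: `x ⬝ 𝔏(M) x = ½ ∑ M i j (x i - x j)²`, and for the ramp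
`(x i - x j)² = 4 (i - j)²`, so only the two side bands of `Q_n` contribute, giving
`x ⬝ 𝔏(Q_n) x = 4 (n - 2)(n + 7)`, while `x ⬝ x = n (n² - 1) / 3`.
-/

open Finset

theorem List.Pairwise.countP_lt_getD_le {α : Type*} [LinearOrder α] {l : List α}
    (hl : l.Pairwise (· ≤ ·)) (k : ℕ) (d : α) : l.countP (· < l.getD k d) ≤ k := by
  by_cases hk : k < l.length
  · have hdrop : ∀ x ∈ l.drop k, l[k] ≤ x := by
      have := hl.drop (i := k)
      rw [List.drop_eq_getElem_cons hk, List.pairwise_cons] at this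
      intro x hx
      rw [List.drop_eq_getElem_cons hk, List.mem_cons] at hx
      rcases hx with rfl | hx
      · exact le_rfl
      · exact this.1 x hx
    rw [List.getD_eq_getElem _ _ hk]
    generalize l[k] = a at hdrop
    have hzero : (l.drop k).countP (· < a) = 0 :=
      List.countP_eq_zero.mpr fun x hx => by simpa using hdrop x hx
    rw [← List.take_append_drop k l, List.countP_append, hzero, add_zero]
    exact List.countP_le_length.trans (List.length_take_le _ _)
  · rw [List.getD_eq_default _ _ (not_lt.mp hk)]
    exact List.countP_le_length.trans (not_lt.mp hk)

theorem Multiset.countP_lt_getD_sort_le {α : Type*} [LinearOrder α] (s : Multiset α) (k : ℕ)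
    (d : α) : s.countP (· < (s.sort (· ≤ ·)).getD k d) ≤ k := by
  have := (Multiset.pairwise_sort s (· ≤ ·)).countP_lt_getD_le k d
  rwa [← Multiset.coe_countP, Multiset.sort_eq] at this

namespace Matrix.IsHermitian

variable {m : Type*} [Fintype m] [DecidableEq m] {A : Matrix m m ℝ} (hA : A.IsHermitian)

include hA in
theorem eq_of_eigenvalues_lt_kthSmallest_two {i j : m} (hi : hA.eigenvalues i < kthSmallest A 2)
    (hj : hA.eigenvalues j < kthSmallest A 2) : i = j := by
  have hcard : (univ.filter fun i => hA.eigenvalues i < kthSmallest A 2).card ≤ 1 := by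
    rw [kthSmallest, eigsList, dif_pos hA]
    have := (univ.val.map hA.eigenvalues).countP_lt_getD_sort_le 1 0
    rwa [Multiset.countP_map] at this
  exact Finset.card_le_one.mp hcard i (by simpa using hi) j (by simpa using hj)

noncomputable def eigenCoords (x : m → ℝ) : m → ℝ :=
  (hA.eigenvectorUnitary : Matrix m m ℝ)ᵀ *ᵥ x

theorem eigenvectorUnitary_mul_transpose :
    (hA.eigenvectorUnitary : Matrix m m ℝ) * (hA.eigenvectorUnitary : Matrix m m ℝ)ᵀ = 1 := by
  simpa [star_eq_conjTranspose] using Unitary.coe_mul_star_self hA.eigenvectorUnitary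

theorem transpose_eigenvectorUnitary_mul :
    (hA.eigenvectorUnitary : Matrix m m ℝ)ᵀ * (hA.eigenvectorUnitary : Matrix m m ℝ) = 1 := by
  simpa [star_eq_conjTranspose] using Unitary.coe_star_mul_self hA.eigenvectorUnitary

theorem eq_eigenvectorUnitary_mul_diagonal_mul_transpose :
    A = (hA.eigenvectorUnitary : Matrix m m ℝ) * diagonal hA.eigenvalues *
      (hA.eigenvectorUnitary : Matrix m m ℝ)ᵀ := by
  conv_lhs => rw [hA.spectral_theorem]
  simp [star_eq_conjTranspose, RCLike.ofReal_real_eq_id]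

theorem eigenCoords_dotProduct_eigenCoords (x y : m → ℝ) :
    hA.eigenCoords x ⬝ᵥ hA.eigenCoords y = x ⬝ᵥ y := by
  rw [eigenCoords, eigenCoords, dotProduct_mulVec, vecMul_transpose, mulVec_mulVec,
    eigenvectorUnitary_mul_transpose, one_mulVec]

theorem dotProduct_mulVec_self_eq_sum (x : m → ℝ) :
    x ⬝ᵥ A *ᵥ x = ∑ i, hA.eigenvalues i * hA.eigenCoords x i ^ 2 := by
  conv_lhs => rw [hA.eq_eigenvectorUnitary_mul_diagonal_mul_transpose]
  rw [← mulVec_mulVec, ← mulVec_mulVec, dotProduct_mulVec, ← mulVec_transpose]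
  simp only [dotProduct, mulVec_diagonal, eigenCoords]
  exact Finset.sum_congr rfl fun i _ => by ring

theorem eigenCoords_mulVec (x : m → ℝ) :
    hA.eigenCoords (A *ᵥ x) = diagonal hA.eigenvalues *ᵥ hA.eigenCoords x := by
  have h := congrArg ((hA.eigenvectorUnitary : Matrix m m ℝ)ᵀ * ·)
    hA.eq_eigenvectorUnitary_mul_diagonal_mul_transpose
  simp only [← mul_assoc, transpose_eigenvectorUnitary_mul, one_mul] at h
  rw [eigenCoords, eigenCoords, mulVec_mulVec, h, mulVec_mulVec]

theorem eigenvalues_mul_eigenCoords {v : m → ℝ} {c : ℝ} (hv : A *ᵥ v = c • v) (i : m) :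
    hA.eigenvalues i * hA.eigenCoords v i = c * hA.eigenCoords v i := by
  have h := congrFun (hA.eigenCoords_mulVec v) i
  rwa [hv, eigenCoords, mulVec_smul, ← eigenCoords, mulVec_diagonal, eq_comm] at h

theorem mul_dotProduct_self_le_dotProduct_mulVec {μ : ℝ} {x : m → ℝ}
    (hx : ∀ i, hA.eigenvalues i < μ → hA.eigenCoords x i = 0) :
    μ * (x ⬝ᵥ x) ≤ x ⬝ᵥ A *ᵥ x := by
  rw [← hA.eigenCoords_dotProduct_eigenCoords, hA.dotProduct_mulVec_self_eq_sum, dotProduct,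
    Finset.mul_sum]
  refine Finset.sum_le_sum fun i _ => ?_
  rcases lt_or_ge (hA.eigenvalues i) μ with hi | hi
  · simp [hx i hi]
  · nlinarith [mul_self_nonneg (hA.eigenCoords x i)]

include hA in
theorem kthSmallest_two_le_max {v x : m → ℝ} {c : ℝ} (hv : A *ᵥ v = c • v) (hv0 : v ≠ 0)
    (hx0 : x ≠ 0) (hxv : x ⬝ᵥ v = 0) :
    kthSmallest A 2 ≤ max c (x ⬝ᵥ A *ᵥ x / x ⬝ᵥ x) := by
  by_contra! h
  obtain ⟨hc, hx⟩ := max_lt_iff.mp h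
  -- Then `c` is the only eigenvalue below `μ₂`, so `v` lies in its eigenspace and `x ⊥ v` has no
  -- component there: the Rayleigh quotient of `x` would be at least `μ₂`.
  set μ := kthSmallest A 2
  set w := hA.eigenCoords v
  have hw : ∀ i, hA.eigenvalues i ≠ c → w i = 0 := fun i hi =>
    (mul_eq_mul_right_iff.mp (hA.eigenvalues_mul_eigenCoords hv i)).resolve_left hi
  obtain ⟨i₀, hi₀⟩ : ∃ i₀, w i₀ ≠ 0 := by
    by_contra! hw0
    apply hv0
    rw [← dotProduct_self_eq_zero, ← hA.eigenCoords_dotProduct_eigenCoords]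
    simp [w, funext hw0]
  have hc₀ : hA.eigenvalues i₀ = c := not_not.mp fun h => hi₀ (hw i₀ h)
  have hlow : ∀ i, hA.eigenvalues i < μ → i = i₀ := fun i hi =>
    hA.eq_of_eigenvalues_lt_kthSmallest_two hi (hc₀ ▸ hc)
  have hwi : ∀ i, i ≠ i₀ → w i = 0 := fun i hi => hw i fun hic => hi (hlow i (hic ▸ hc))
  have hyw : hA.eigenCoords x i₀ * w i₀ = 0 := by
    rw [← hxv, ← hA.eigenCoords_dotProduct_eigenCoords]
    exact (Finset.sum_eq_single (f := fun i => hA.eigenCoords x i * w i) i₀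
      (fun i _ hi => by rw [hwi i hi, mul_zero]) (by simp)).symm
  have hy : ∀ i, hA.eigenvalues i < μ → hA.eigenCoords x i = 0 := fun i hi =>
    hlow i hi ▸ (mul_eq_zero.mp hyw).resolve_right hi₀
  have hpos : 0 < x ⬝ᵥ x := lt_of_le_of_ne (Finset.sum_nonneg fun i _ => mul_self_nonneg (x i))
    (Ne.symm (dotProduct_self_eq_zero.not.mpr hx0))
  exact (not_le.mpr hx) ((le_div_iff₀ hpos).mpr (hA.mul_dotProduct_self_le_dotProduct_mulVec hy))

end Matrix.IsHermitian

section Laplacian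

variable {n : ℕ} (M : Matrix (Fin n) (Fin n) ℝ)

theorem Lap_mulVec_one : Lap M *ᵥ 1 = 0 := by
  ext i
  rw [Lap, sub_mulVec, Pi.sub_apply, mulVec_diagonal]
  simp [mulVec, dotProduct]

theorem isSymm_Lap {M : Matrix (Fin n) (Fin n) ℝ} (hM : M.IsSymm) : (Lap M).IsSymm :=
  (isSymm_diagonal _).sub hM

theorem dotProduct_Lap_mulVec (x : Fin n → ℝ) :
    x ⬝ᵥ Lap M *ᵥ x = ∑ i, ∑ j, M i j * x i * (x i - x j) := by
  rw [Lap, sub_mulVec, dotProduct_sub]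
  simp only [dotProduct, mulVec_diagonal]
  simp only [mulVec, dotProduct, Finset.mul_sum, Finset.sum_mul, ← Finset.sum_sub_distrib]
  exact Finset.sum_congr rfl fun i _ => Finset.sum_congr rfl fun j _ => by ring

theorem two_mul_dotProduct_Lap_mulVec {M : Matrix (Fin n) (Fin n) ℝ} (hM : M.IsSymm)
    (x : Fin n → ℝ) : 2 * (x ⬝ᵥ Lap M *ᵥ x) = ∑ i, ∑ j, M i j * (x i - x j) ^ 2 := by
  have hswap : ∑ i, ∑ j, M i j * x i * (x i - x j) = ∑ i, ∑ j, M i j * x j * (x j - x i) := by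
    rw [Finset.sum_comm]
    exact Finset.sum_congr rfl fun i _ => Finset.sum_congr rfl fun j _ => by rw [hM.apply]
  calc 2 * (x ⬝ᵥ Lap M *ᵥ x)
      = ∑ i, ∑ j, M i j * x i * (x i - x j) + ∑ i, ∑ j, M i j * x j * (x j - x i) := by
        rw [← hswap, dotProduct_Lap_mulVec, two_mul]
    _ = ∑ i, ∑ j, M i j * (x i - x j) ^ 2 := by
        rw [← Finset.sum_add_distrib]
        exact Finset.sum_congr rfl fun i _ => by
          rw [← Finset.sum_add_distrib]; exact Finset.sum_congr rfl fun j _ => by ring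

end Laplacian

theorem sum_range_sum_range_natAbs_sub {R : Type*} [CommRing R] (φ : ℕ → R) (hφ : φ 0 = 0)
    (n : ℕ) :
    ∑ i ∈ range n, ∑ j ∈ range n, φ ((i : ℤ) - j).natAbs =
      2 * ∑ d ∈ range n, ((n : R) - d) * φ d := by
  induction n with
  | zero => simp
  | succ n ih =>
    have hrow : ∀ i ∈ range n, φ ((i : ℤ) - n).natAbs = φ (n - 1 - i + 1) := fun i hi => by
      rw [Finset.mem_range] at hi
      congr 1; omega
    have hcol : ∀ j ∈ range n, φ ((n : ℤ) - j).natAbs = φ (n - 1 - j + 1) := fun j hj => by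
      rw [Finset.mem_range] at hj
      congr 1; omega
    simp only [Finset.sum_range_succ, Finset.sum_add_distrib, ih, sub_self, Int.natAbs_zero, hφ,
      Finset.sum_congr rfl hrow, Finset.sum_congr rfl hcol,
      Finset.sum_range_reflect (fun d => φ (d + 1)) n]
    have hshift : ∑ d ∈ range n, φ d + φ n = ∑ d ∈ range n, φ (d + 1) := by
      rw [← Finset.sum_range_succ, Finset.sum_range_succ', hφ, add_zero]
    have hweights : ∑ d ∈ range n, ((n + 1 : ℕ) - (d : R)) * φ d =
        ∑ d ∈ range n, ((n : R) - d) * φ d + ∑ d ∈ range n, φ d := by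
      rw [← Finset.sum_add_distrib]
      exact Finset.sum_congr rfl fun d _ => by push_cast; ring
    rw [hweights]
    push_cast
    linear_combination -2 * hshift

theorem Fin.sum_sum_natAbs_sub {R : Type*} [CommRing R] (φ : ℕ → R) (hφ : φ 0 = 0) (n : ℕ) :
    ∑ i : Fin n, ∑ j : Fin n, φ (((i : ℕ) : ℤ) - (j : ℕ)).natAbs =
      2 * ∑ d ∈ range n, ((n : R) - d) * φ d := by
  rw [← sum_range_sum_range_natAbs_sub φ hφ,
    Fin.sum_univ_eq_sum_range (fun i => ∑ j : Fin n, φ ((i : ℤ) - j).natAbs)]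
  exact Finset.sum_congr rfl fun i _ =>
    Fin.sum_univ_eq_sum_range (fun j => φ ((i : ℤ) - j).natAbs) n

theorem sum_range_sub_two_mul (a : ℝ) (n : ℕ) :
    ∑ i ∈ range n, (a - 2 * i) = n * (a - (n - 1)) := by
  induction n with
  | zero => simp
  | succ n ih => rw [Finset.sum_range_succ, ih]; push_cast; ring

theorem sum_range_sub_two_mul_sq (a : ℝ) (n : ℕ) :
    ∑ i ∈ range n, (a - 2 * i) ^ 2 =
      n * a ^ 2 - 2 * a * n * (n - 1) + 2 * n * (n - 1) * (2 * n - 1) / 3 := by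
  induction n with
  | zero => simp
  | succ n ih => rw [Finset.sum_range_succ, ih]; push_cast; ring

noncomputable def ramp (n : ℕ) (i : Fin n) : ℝ := (n : ℝ) - 1 - 2 * (i : ℕ)

theorem sum_ramp (n : ℕ) : ∑ i, ramp n i = 0 := by
  simp only [ramp]
  rw [Fin.sum_univ_eq_sum_range (fun i => (n : ℝ) - 1 - 2 * i), sum_range_sub_two_mul]
  ring

theorem ramp_dotProduct_self (n : ℕ) : ramp n ⬝ᵥ ramp n = n * ((n : ℝ) ^ 2 - 1) / 3 := by
  simp only [dotProduct, ← sq, ramp]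
  rw [Fin.sum_univ_eq_sum_range (fun i => ((n : ℝ) - 1 - 2 * i) ^ 2), sum_range_sub_two_mul_sq]
  ring

theorem ramp_sub_ramp_sq {n : ℕ} (i j : Fin n) :
    (ramp n i - ramp n j) ^ 2 = 4 * ((((i : ℕ) : ℤ) - (j : ℕ)).natAbs : ℝ) ^ 2 := by
  rw [Nat.cast_natAbs, Int.cast_abs, sq_abs, ramp, ramp]
  push_cast
  ring

theorem isSymm_Qmat (n : ℕ) : (Qmat n).IsSymm := by
  refine IsSymm.ext fun i j => ?_
  rcases eq_or_ne i j with rfl | hij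
  · rfl
  · have hd : (((i : ℕ) : ℤ) - (j : ℕ)).natAbs ≠ 0 := by
      have := Fin.val_ne_of_ne hij
      omega
    have hcomm : (((j : ℕ) : ℤ) - (i : ℕ)).natAbs = (((i : ℕ) : ℤ) - (j : ℕ)).natAbs := by omega
    simp only [Qmat, hcomm, if_neg hd]

theorem ramp_dotProduct_Lap_Qmat_mulVec {n : ℕ} (hn : 3 ≤ n) :
    ramp n ⬝ᵥ Lap (Qmat n) *ᵥ ramp n = 4 * ((n : ℝ) - 2) * ((n : ℝ) + 7) := by
  set φ : ℕ → ℝ := fun d => if d = 1 then 4 * ((n : ℝ) - 2) else if d = 2 then 32 else 0 with hφ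
  have hentry : ∀ i j,
      Qmat n i j * (ramp n i - ramp n j) ^ 2 = φ (((i : ℕ) : ℤ) - (j : ℕ)).natAbs := by
    intro i j
    rw [ramp_sub_ramp_sq, Qmat, hφ]
    split_ifs <;> simp_all <;> ring
  have hweights : ∑ d ∈ range n, ((n : ℝ) - d) * φ d = 4 * ((n : ℝ) - 2) * ((n : ℝ) + 7) := by
    rw [Finset.sum_eq_add_of_mem 1 2 (Finset.mem_range.mpr (by omega))
      (Finset.mem_range.mpr (by omega)) (by norm_num)
      fun d _ hd => by simp only [hφ, if_neg hd.1, if_neg hd.2, mul_zero]]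
    simp only [hφ, if_pos, if_neg (show (2 : ℕ) ≠ 1 by norm_num), Nat.cast_one, Nat.cast_ofNat]
    ring
  have h := two_mul_dotProduct_Lap_mulVec (isSymm_Qmat n) (ramp n)
  rw [Finset.sum_congr rfl fun i _ => Finset.sum_congr rfl fun j _ => hentry i j,
    Fin.sum_sum_natAbs_sub φ (by simp [hφ]), hweights] at h
  linarith

theorem stmt10 (n : ℕ) (hn : 4 ≤ n) :
    kthSmallest (Lap (Qmat n)) 2 ≤
      12 * ((n : ℝ) - 2) * ((n : ℝ) + 7) / ((n : ℝ) * ((n : ℝ) ^ 2 - 1)) := by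
  have hn' : (4 : ℝ) ≤ n := by exact_mod_cast hn
  have hLap : (Lap (Qmat n)).IsHermitian := isHermitian_iff_isSymm.mpr (isSymm_Lap (isSymm_Qmat n))
  have hone : (1 : Fin n → ℝ) ≠ 0 := fun h => one_ne_zero (congrFun h ⟨0, by omega⟩)
  have hramp : ramp n ≠ 0 := fun h => by
    have := ramp_dotProduct_self n
    rw [h, zero_dotProduct] at this
    nlinarith
  calc kthSmallest (Lap (Qmat n)) 2
      ≤ max 0 (ramp n ⬝ᵥ Lap (Qmat n) *ᵥ ramp n / ramp n ⬝ᵥ ramp n) :=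
        hLap.kthSmallest_two_le_max (by rw [zero_smul]; exact Lap_mulVec_one _) hone hramp
          (by rw [dotProduct_one, sum_ramp])
    _ = 4 * ((n : ℝ) - 2) * ((n : ℝ) + 7) / (n * ((n : ℝ) ^ 2 - 1) / 3) := by
        rw [ramp_dotProduct_Lap_Qmat_mulVec (by omega), ramp_dotProduct_self, max_eq_right]
        exact div_nonneg (by nlinarith) (by nlinarith)
    _ = _ := by rw [div_div_eq_mul_div]; ring
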